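/- arXiv:2305.01756 — 2 statements merged into one kernel-verified Lean document; each statement's English description precedes it below -/
import Mathlib

section
/- Let H be a hanging subtree of T \ F that is joined by a back-edge to at least one internal component, let C' be the lowest internal component joined to H by a back-edge (i.e., C' is an ancestor of every internal component joined to H by a back-edge), and let d = |F|. Then there exists i ∈ {1,...,d} such that low_i(r_H) exists and low_i(r_H) ∈ C'. -/
variable {n : ℕ}

/-- `Anc p v u` : `v` is an ancestor of `u` in the rooted tree with parent function `p`
(every vertex is an ancestor of itself). -/
def Anc (p : Fin n → Fin n) (v u : Fin n) : Prop :=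
  Relation.ReflTransGen (fun a b => p a = b) u v

/-- `ND p v` : the number of descendants of `v` (including `v`). -/
noncomputable def ND (p : Fin n → Fin n) (v : Fin n) : ℕ :=
  Set.ncard {u | Anc p v u}

/-- `InComp p F v u` : `u` lies in the same connected component of `T \ F` as `v`
(connectivity via tree edges avoiding the failed set `F`). -/
def InComp (p : Fin n → Fin n) (F : Set (Fin n)) (v u : Fin n) : Prop :=
  Relation.ReflTransGen (fun a b => a ∉ F ∧ b ∉ F ∧ (p a = b ∨ p b = a)) v u

/-- `ρ` is the root of its connected component of `T \ F`:
`ρ` is non-failed and an ancestor of every vertex of its component. -/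
def IsCompRoot (p : Fin n → Fin n) (F : Set (Fin n)) (ρ : Fin n) : Prop :=
  ρ ∉ F ∧ ∀ u, InComp p F ρ u → Anc p ρ u

/-- The component rooted at `ρ` is internal: some failed vertex is a descendant of `ρ`. -/
def Internal (p : Fin n → Fin n) (F : Set (Fin n)) (ρ : Fin n) : Prop :=
  ∃ f ∈ F, Anc p ρ f

/-- `b` is a boundary vertex of the component of `T \ F` rooted at `ρ`. -/
def Boundary (p : Fin n → Fin n) (F : Set (Fin n)) (ρ b : Fin n) : Prop :=
  b ∈ F ∧ InComp p F ρ (p b)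

/-- `(x, y)` is a back-edge: a non-tree edge of `G` with `y` an ancestor of `x`. -/
def IsBack (G : SimpleGraph (Fin n)) (p : Fin n → Fin n) (x y : Fin n) : Prop :=
  G.Adj x y ∧ Anc p y x ∧ p x ≠ y

/-- The set of lower endpoints `y < v` of back-edges whose upper endpoint is a
descendant of `v`. -/
def LowSet (G : SimpleGraph (Fin n)) (p : Fin n → Fin n) (v : Fin n) : Set (Fin n) :=
  {y | (∃ x, Anc p v x ∧ IsBack G p x y) ∧ y < v}

/-- `IsLow G p k v y` : `y = low_k(v)`, i.e. `y` is the `k`-th smallest element of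
`LowSet G p v` (for `k ≥ 1`). -/
def IsLow (G : SimpleGraph (Fin n)) (p : Fin n → Fin n) (k : ℕ) (v y : Fin n) : Prop :=
  y ∈ LowSet G p v ∧ Set.ncard {z ∈ LowSet G p v | z < y} = k - 1

/-- `a` and `b` are connected in `G \ F`. -/
def ConnGF (G : SimpleGraph (Fin n)) (F : Set (Fin n)) (a b : Fin n) : Prop :=
  Relation.ReflTransGen (fun u w => G.Adj u w ∧ u ∉ F ∧ w ∉ F) a b

/-- `g = parent_F(f)` : `g` is the nearest (deepest) proper ancestor of `f` lying in `F`. -/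
def NearestF (p : Fin n → Fin n) (F : Set (Fin n)) (f g : Fin n) : Prop :=
  g ∈ F ∧ Anc p g f ∧ g ≠ f ∧ ∀ g' ∈ F, Anc p g' f → g' ≠ f → Anc p g' g

section Helpers
variable {p : Fin n → Fin n} {r : Fin n} {F : Set (Fin n)}

lemma anc_refl (v : Fin n) : Anc p v v := Relation.ReflTransGen.refl

lemma anc_trans {a b c : Fin n} (h1 : Anc p a b) (h2 : Anc p b c) : Anc p a c :=
  Relation.ReflTransGen.trans h2 h1

lemma anc_le (hpr : p r = r) (hplt : ∀ v, v ≠ r → p v < v)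
    {y x : Fin n} (hxy : Anc p y x) : y ≤ x := by
  induction hxy with
  | refl => exact le_refl _
  | tail hab hbc ih =>
    rename_i b c
    rcases eq_or_ne b r with hb | hb
    · subst hb; rw [hpr] at hbc; exact hbc ▸ ih
    · exact le_of_lt (lt_of_lt_of_le (hbc ▸ hplt b hb) ih)

lemma anc_antisymm (hpr : p r = r) (hplt : ∀ v, v ≠ r → p v < v)
    {a b : Fin n} (h1 : Anc p a b) (h2 : Anc p b a) : a = b :=
  le_antisymm (anc_le hpr hplt h1) (anc_le hpr hplt h2)

/-- two ancestors of a common vertex are comparable -/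
lemma anc_total (hpr : p r = r) (hplt : ∀ v, v ≠ r → p v < v)
    (hpre : ∀ u v w : Fin n, u < v → v < w → Anc p u w → Anc p u v)
    {a b x : Fin n} (ha : Anc p a x) (hb : Anc p b x) :
    Anc p a b ∨ Anc p b a := by
  rcases lt_trichotomy a b with hab | hab | hab
  · rcases eq_or_lt_of_le (anc_le hpr hplt hb) with hbx | hbx
    · left; exact hbx ▸ ha
    · left; exact hpre a b x hab hbx ha
  · left; exact hab ▸ anc_refl a
  · rcases eq_or_lt_of_le (anc_le hpr hplt ha) with hax | hax
    · right; exact hax ▸ hb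
    · right; exact hpre b a x hab hax hb

/-- proper ancestor is an ancestor of the parent -/
lemma anc_parent {z h : Fin n} (hzh : Anc p z h) (hne : z ≠ h) : Anc p z (p h) := by
  rcases (Relation.ReflTransGen.cases_head hzh) with heq | ⟨c, hc, hrest⟩
  · exact absurd heq.symm hne
  · exact hc ▸ hrest

lemma incomp_symm {a b : Fin n} (h : InComp p F a b) : InComp p F b a := by
  refine (@Relation.ReflTransGen.symmetric _ _ ⟨?_⟩).symm _ _ h
  rintro u v ⟨h1, h2, h3⟩
  exact ⟨h2, h1, h3.symm⟩

/-- a vertex whose parent is failed (or the root) is an ancestor of everything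
in its component. -/
lemma root_anc (hpr : p r = r) (hρF : (ρ : Fin n) ∉ F) (htop : p ρ ∈ F ∨ ρ = r)
    {u : Fin n} (hu : InComp p F ρ u) : Anc p ρ u := by
  induction hu with
  | refl => exact anc_refl ρ
  | tail hab hbc ih =>
    rename_i a b
    obtain ⟨haF, hbF, hstep⟩ := hbc
    rcases hstep with hpa | hpb
    · -- b = p a : going up
      rcases eq_or_ne a ρ with rfl | hne
      · rcases htop with hf | hr
        · exact absurd (hpa ▸ hf) hbF
        · subst hr; rw [hpr] at hpa; exact hpa ▸ Relation.ReflTransGen.refl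
      · -- a ≠ ρ, Anc ρ a means chain a → p a →* ρ
        rcases (Relation.ReflTransGen.cases_head ih) with heq | ⟨c, hc, hrest⟩
        · exact absurd heq hne
        · exact (hc.symm.trans hpa) ▸ hrest
    · -- p b = a : going down
      exact anc_trans ih (Relation.ReflTransGen.single hpb)

end Helpers

section Helpers2
variable {p : Fin n → Fin n} {r : Fin n} {F : Set (Fin n)}

/-- if `u ≠ ρ` is a proper descendant of `ρ` in `ρ`'s component, then the edge
`(u, p u)` is usable. -/
lemma up_in_comp (hpr : p r = r) (hplt : ∀ v, v ≠ r → p v < v)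
    {ρ u : Fin n} (hcomp : InComp p F ρ u) (hanc : Anc p ρ u) (hne : u ≠ ρ) :
    p u ∉ F ∧ InComp p F ρ (p u) := by
  have main : ∀ b, InComp p F ρ b → Anc p u b → p u ∉ F ∧ InComp p F ρ (p u) := by
    intro b hb
    induction hb with
    | refl =>
      intro hub
      exact absurd (anc_antisymm hpr hplt hanc hub) (Ne.symm hne)
    | tail hab hbc ih =>
      rename_i a b
      intro hub
      obtain ⟨haF, hbF, hstep⟩ := hbc
      rcases hstep with hpa | hpb
      · -- b = p a, so Anc u a holds too
        have hua : Anc p u a := Relation.ReflTransGen.head hpa hub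
        exact ih hua
      · -- p b = a
        rcases eq_or_ne u b with rfl | hneub
        · exact ⟨hpb ▸ haF, hpb ▸ hab⟩
        · have hua : Anc p u a := hpb ▸ anc_parent hub hneub
          exact ih hua
  exact main u hcomp (anc_refl u)

/-- intermediate vertices between a component root and a component member are
in the component. -/
lemma climb (hpr : p r = r) (hplt : ∀ v, v ≠ r → p v < v)
    {ρ u w : Fin n} (hcomp : InComp p F ρ u) (hancu : Anc p ρ u)
    (hancw : Anc p ρ w) (hwu : Anc p w u) : InComp p F ρ w := by
  have main : ∀ a : Fin n, Anc p w a → InComp p F ρ a → Anc p ρ a → InComp p F ρ w := by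
    intro a hwa
    induction hwa using Relation.ReflTransGen.head_induction_on with
    | refl => intro hc _; exact hc
    | head hstep hrest ih =>
      rename_i a c
      intro hca hanca
      rcases eq_or_ne a ρ with heq | hne
      · -- w is an ancestor of ρ and ρ is an ancestor of w
        have hwρ : Anc p w ρ := heq ▸ Relation.ReflTransGen.head hstep hrest
        exact (anc_antisymm hpr hplt hancw hwρ) ▸ Relation.ReflTransGen.refl
      · obtain ⟨hpaF, hcpa⟩ := up_in_comp hpr hplt hca hanca hne
        have hρc : Anc p ρ c := hstep ▸ anc_parent hanca (Ne.symm hne)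
        exact ih (hstep ▸ hcpa) (hstep ▸ hρc)
  exact main u hwu hcomp hancu

/-- the subtree of a hanging-subtree root is entirely inside its component. -/
lemma subtree_comp {h : Fin n} (hhF : h ∉ F)
    (hHang : ∀ f ∈ F, ¬ Anc p h f) {x : Fin n} (hx : Anc p h x) :
    InComp p F h x := by
  induction hx using Relation.ReflTransGen.head_induction_on with
  | refl => exact Relation.ReflTransGen.refl
  | head hstep hrest ih =>
    rename_i a c
    -- hstep : p a = c, hrest : RTG c h, so h is ancestor of c and of a
    have hha : Anc p h a := Relation.ReflTransGen.head hstep hrest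
    have hhc : Anc p h c := hrest
    have haF : a ∉ F := fun hmem => hHang a hmem hha
    have hcF : c ∉ F := fun hmem => hHang c hmem hhc
    exact Relation.ReflTransGen.tail ih ⟨hcF, haF, Or.inr hstep⟩

/-- every non-failed vertex has a "component root" above it. -/
lemma exists_root (hpr : p r = r) (hplt : ∀ v, v ≠ r → p v < v)
    {z : Fin n} (hz : z ∉ F) :
    ∃ ρ, ρ ∉ F ∧ (p ρ ∈ F ∨ ρ = r) ∧ InComp p F ρ z ∧ Anc p ρ z := by
  have key : ∀ m : ℕ, ∀ z : Fin n, z.val < m → z ∉ F →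
      ∃ ρ, ρ ∉ F ∧ (p ρ ∈ F ∨ ρ = r) ∧ InComp p F ρ z ∧ Anc p ρ z := by
    intro m
    induction m with
    | zero => intro z hz; omega
    | succ m ih =>
      intro z hzm hz
      rcases eq_or_ne z r with rfl | hzr
      · exact ⟨z, hz, Or.inr rfl, Relation.ReflTransGen.refl, anc_refl z⟩
      rcases Classical.em (p z ∈ F) with hpz | hpz
      · exact ⟨z, hz, Or.inl hpz, Relation.ReflTransGen.refl, anc_refl z⟩
      · have hlt : (p z).val < m := by
          have := hplt z hzr
          omega
        obtain ⟨ρ, h1, h2, h3, h4⟩ := ih (p z) hlt hpz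
        refine ⟨ρ, h1, h2, Relation.ReflTransGen.tail h3 ⟨hpz, hz, Or.inr rfl⟩,
          anc_trans h4 (Relation.ReflTransGen.single rfl)⟩
  exact key (z.val + 1) z (by omega) hz

end Helpers2

/-- If `H` is a hanging subtree joined by a back-edge to at least one internal
component and `C'` is the lowest such internal component, then `low_i(r_H) ∈ C'`
for some `i ∈ {1, ..., |F|}`. -/
theorem stmt14
    (G : SimpleGraph (Fin n)) (p : Fin n → Fin n) (r : Fin n)
    (hG : G.Connected)
    (hpr : p r = r) (hplt : ∀ v, v ≠ r → p v < v) (hroot : ∀ v, Anc p r v)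
    (hspan : ∀ v, v ≠ r → G.Adj (p v) v)
    (hdfs : ∀ x y, G.Adj x y → Anc p x y ∨ Anc p y x)
    (hpre : ∀ u v w : Fin n, u < v → v < w → Anc p u w → Anc p u v)
    (F : Set (Fin n)) (hrF : r ∉ F)
    (h : Fin n) (hH : IsCompRoot p F h) (hpH : p h ∈ F) (hHang : ¬ Internal p F h)
    (ρ' : Fin n) (hρ' : IsCompRoot p F ρ') (hint : Internal p F ρ')
    (hjoin : ∃ x y, IsBack G p x y ∧ InComp p F h x ∧ InComp p F ρ' y)
    (hlowest : ∀ ρ, IsCompRoot p F ρ → Internal p F ρ →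
      (∃ x y, IsBack G p x y ∧ InComp p F h x ∧ InComp p F ρ y) → Anc p ρ' ρ) :
    ∃ i, 1 ≤ i ∧ i ≤ F.ncard ∧ ∃ y, IsLow G p i h y ∧ InComp p F ρ' y := by
    classical
  obtain ⟨hhF, hHanc⟩ := hH
  obtain ⟨hρF, hρanc⟩ := hρ'
  have hHangF : ∀ f ∈ F, ¬ Anc p h f := fun f hf ha => hHang ⟨f, hf, ha⟩
  obtain ⟨x0, y0, hbe0, hx0, hy0⟩ := hjoin
  have hanc_hx0 : Anc p h x0 := hHanc x0 hx0
  have hy0x0 : Anc p y0 x0 := hbe0.2.1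
  have hnot : ¬ Anc p h y0 := by
    intro hcontra
    have h1 : InComp p F h y0 := subtree_comp hhF hHangF hcontra
    have h2 : InComp p F h ρ' := Relation.ReflTransGen.trans h1 (incomp_symm hy0)
    have h3 : Anc p h ρ' := hHanc ρ' h2
    obtain ⟨f, hf, hanc⟩ := hint
    exact hHangF f hf (anc_trans h3 hanc)
  have hy0h : Anc p y0 h := by
    rcases anc_total hpr hplt hpre hy0x0 hanc_hx0 with h1 | h1
    · exact h1
    · exact absurd h1 hnot
  have hy0ne : y0 ≠ h := fun he => hnot (by rw [he]; exact anc_refl h)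
  have hy0lt : y0 < h := lt_of_le_of_ne (anc_le hpr hplt hy0h) hy0ne
  have hy0mem : y0 ∈ LowSet G p h := ⟨⟨x0, hanc_hx0, hbe0⟩, hy0lt⟩
  set S : Set (Fin n) := {z | z ∈ LowSet G p h ∧ InComp p F ρ' z} with hSdef
  have hSne : S.Nonempty := ⟨y0, hy0mem, hy0⟩
  obtain ⟨y, hyS, hymin⟩ := Set.exists_min_image S id (Set.toFinite S) hSne
  have hyLow : y ∈ LowSet G p h := hyS.1
  have hycomp : InComp p F ρ' y := hyS.2
  have hLanc : ∀ z ∈ LowSet G p h, Anc p z h ∧ z ≠ h := by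
    rintro z ⟨⟨x, hx, hb⟩, hzlt⟩
    rcases anc_total hpr hplt hpre hb.2.1 hx with h1 | h1
    · exact ⟨h1, ne_of_lt hzlt⟩
    · exact absurd (anc_le hpr hplt h1) (not_le_of_gt hzlt)
  obtain ⟨hyh, hyhne⟩ := hLanc y hyLow
  have hkey : ∀ z ∈ LowSet G p h, z < y → z ∈ F := by
    intro z hzL hzy
    by_contra hzF
    obtain ⟨hzh, hzhne⟩ := hLanc z hzL
    have hzy' : Anc p z y := by
      rcases anc_total hpr hplt hpre hzh hyh with h1 | h1
      · exact h1
      · exact absurd (anc_le hpr hplt h1) (not_le_of_gt hzy)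
    have hρy : Anc p ρ' y := hρanc y hycomp
    have hnotin : ¬ InComp p F ρ' z := by
      intro hc
      exact absurd hzy (not_lt_of_ge (hymin z ⟨hzL, hc⟩))
    rcases anc_total hpr hplt hpre hρy hzy' with h1 | h1
    · exact hnotin (climb hpr hplt hycomp hρy h1 hzy')
    · rcases eq_or_ne z ρ' with heq | hne
      · exact hnotin (heq ▸ Relation.ReflTransGen.refl)
      · obtain ⟨ρz, hρzF, hρztop, hρzcomp, hρzanc⟩ := exists_root hpr hplt hzF
        have hroot' : IsCompRoot p F ρz := ⟨hρzF, fun u hu => root_anc hpr hρzF hρztop hu⟩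
        have hintz : Internal p F ρz := ⟨p h, hpH, anc_trans hρzanc (anc_parent hzh hzhne)⟩
        obtain ⟨⟨xz, hxz, hbz⟩, _⟩ := hzL
        have hjz : ∃ x y, IsBack G p x y ∧ InComp p F h x ∧ InComp p F ρz y :=
          ⟨xz, z, hbz, subtree_comp hhF hHangF hxz, hρzcomp⟩
        have h2 : Anc p ρ' ρz := hlowest ρz hroot' hintz hjz
        have h3 : Anc p ρz ρ' := anc_trans hρzanc h1
        have h4 : ρ' = ρz := anc_antisymm hpr hplt h2 h3
        exact hnotin (h4 ▸ hρzcomp)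
  set A : Set (Fin n) := {z ∈ LowSet G p h | z < y} with hAdef
  have hAsub : A ⊆ F := fun z hz => hkey z hz.1 hz.2
  have hyph : y ≤ p h := anc_le hpr hplt (anc_parent hyh hyhne)
  have hphA : p h ∉ A := fun hc => absurd hc.2 (not_lt_of_ge hyph)
  have hins : insert (p h) A ⊆ F := Set.insert_subset hpH hAsub
  have hcard : A.ncard + 1 ≤ F.ncard := by
    have h1 : (insert (p h) A).ncard = A.ncard + 1 :=
      Set.ncard_insert_of_notMem hphA (Set.toFinite A)
    calc A.ncard + 1 = (insert (p h) A).ncard := h1.symm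
      _ ≤ F.ncard := Set.ncard_le_ncard hins (Set.toFinite F)
  refine ⟨A.ncard + 1, by omega, hcard, y, ⟨hyLow, ?_⟩, hycomp⟩
  simp [hAdef]
end

section
/- Suppose x lies in a hanging subtree H of T \ F, and for every i ∈ {1,...,|F|} either low_i(r_H) does not exist or low_i(r_H) ∈ F. Then H is a connected component of G \ F; in particular, a vertex y ∉ F is connected to x in G \ F if and only if y ∈ H. -/
variable {n : ℕ}

lemma anc_le_s19 {p : Fin n → Fin n} (hple : ∀ a, p a ≤ a) {v u : Fin n} (h : Anc p v u) :
    v ≤ u := by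
  induction h using Relation.ReflTransGen.head_induction_on with
  | refl => exact le_refl _
  | head hstep _ ih => exact le_trans (hstep ▸ ih) (hple _)

lemma anc_step {p : Fin n → Fin n} {v u : Fin n} (h : Anc p v u) (hne : u ≠ v) :
    Anc p v (p u) := by
  rcases Relation.ReflTransGen.cases_head h with h1 | ⟨c, hc, h2⟩
  · exact absurd h1 hne
  · exact hc ▸ h2

/-- If `x` lies in a hanging subtree `H` of `T \ F` and for every `i ∈ {1,...,|F|}`
`low_i(r_H)` either does not exist or is a failed vertex, then `H` is a connected
component of `G \ F`: a vertex `y ∉ F` is connected to `x` in `G \ F` iff `y ∈ H`. -/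
theorem stmt19
    (G : SimpleGraph (Fin n)) (p : Fin n → Fin n) (r : Fin n)
    (hG : G.Connected)
    (hpr : p r = r) (hplt : ∀ v, v ≠ r → p v < v) (hroot : ∀ v, Anc p r v)
    (hspan : ∀ v, v ≠ r → G.Adj (p v) v)
    (hdfs : ∀ x y, G.Adj x y → Anc p x y ∨ Anc p y x)
    (hpre : ∀ u v w : Fin n, u < v → v < w → Anc p u w → Anc p u v)
    (F : Set (Fin n)) (hrF : r ∉ F)
    (h : Fin n) (hH : IsCompRoot p F h) (hpH : p h ∈ F) (hHang : ¬ Internal p F h)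
    (x : Fin n) (hx : InComp p F h x)
    (hlow : ∀ i, 1 ≤ i → i ≤ F.ncard → ∀ y, IsLow G p i h y → y ∈ F) :
    ∀ y, y ∉ F → (ConnGF G F x y ↔ InComp p F h y) := by
  have hple : ∀ a, p a ≤ a := by
    intro a
    by_cases ha : a = r
    · subst ha; rw [hpr]
    · exact le_of_lt (hplt a ha)
  have hdesc_nF : ∀ u, Anc p h u → u ∉ F := fun u hu huF => hHang ⟨u, huF, hu⟩
  -- descendants of h are in its component
  have hdesc_incomp : ∀ u, Anc p h u → InComp p F h u := by
    have key : ∀ m : ℕ, ∀ u : Fin n, (u : ℕ) = m → Anc p h u → InComp p F h u := by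
      intro m
      induction m using Nat.strong_induction_on with
      | _ m ih =>
        intro u hm hu
        by_cases hne : u = h
        · subst hne; exact Relation.ReflTransGen.refl
        · have hur : u ≠ r := by
            intro hr
            have h1 : r ≤ h := anc_le_s19 hple (hroot h)
            have h2 : h ≤ u := anc_le_s19 hple hu
            rw [hr] at h2
            exact hne (hr.trans (le_antisymm h1 h2))
          have hpu : Anc p h (p u) := anc_step hu hne
          have hlt : (p u : ℕ) < m := hm ▸ (hplt u hur)
          have hIC : InComp p F h (p u) := ih _ hlt (p u) rfl hpu
          exact hIC.tail ⟨hdesc_nF _ hpu, hdesc_nF _ hu, Or.inr rfl⟩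
    exact fun u => key u.val u rfl
  -- tree-connectivity implies graph connectivity
  have hincomp_conn : ∀ u y, InComp p F u y → ConnGF G F u y := by
    intro u y hy
    induction hy with
    | refl => exact Relation.ReflTransGen.refl
    | @tail b c h1 h2 ih =>
      obtain ⟨hbF, hcF, hor⟩ := h2
      rcases hor with hpb | hpc
      · by_cases hbr : b = r
        · subst hbr; rw [hpr] at hpb; exact hpb ▸ ih
        · have hadj := hspan b hbr
          rw [hpb] at hadj
          exact ih.tail ⟨hadj.symm, hbF, hcF⟩
      · by_cases hcr : c = r
        · subst hcr; rw [hpr] at hpc; exact hpc ▸ ih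
        · have hadj := hspan c hcr
          rw [hpc] at hadj
          exact ih.tail ⟨hadj, hbF, hcF⟩
  -- separation lemma
  have hsep : ∀ u w, u ∉ F → w ∉ F → Anc p h u → G.Adj u w → Anc p h w := by
    intro u w hu hw hdu hadj
    by_contra hnw
    have hhu : h ≤ u := anc_le_s19 hple hdu
    rcases hdfs u w hadj with h1 | h2
    · exact hnw (Relation.ReflTransGen.trans h1 hdu)
    · -- h2 : Anc p w u
      have hwh : w < h := by
        rcases lt_trichotomy w h with hlt | heq | hgt
        · exact hlt
        · exact absurd (heq ▸ Relation.ReflTransGen.refl) hnw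
        · exfalso
          have hwu : w ≤ u := anc_le_s19 hple h2
          rcases eq_or_lt_of_le hwu with heq2 | hlt2
          · exact hnw (heq2 ▸ hdu)
          · exact hnw (hpre h w u hgt hlt2 hdu)
      have hanc_wh : Anc p w h := by
        rcases eq_or_lt_of_le hhu with heq | hlt
        · exact heq ▸ h2
        · exact hpre w h u hwh hlt h2
      have hpune : p u ≠ w := by
        intro hpu
        have hune : u ≠ h := by
          intro he; subst he; rw [hpu] at hpH; exact hw hpH
        exact hnw (hpu ▸ anc_step hdu hune)
      have hwS : w ∈ LowSet G p h := ⟨⟨u, hdu, hadj, h2, hpune⟩, hwh⟩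
      -- minimal non-failed element of the low set
      obtain ⟨w0, hw0T, hw0min⟩ :=
        Set.exists_min_image (LowSet G p h \ F) id (Set.toFinite _) ⟨w, hwS, hw⟩
      have hsub : {z | z ∈ LowSet G p h ∧ z < w0} ⊆ F := by
        rintro z ⟨hzS, hzlt⟩
        by_contra hzF
        exact absurd (hw0min z ⟨hzS, hzF⟩) (not_le.mpr hzlt)
      have hm : Set.ncard {z | z ∈ LowSet G p h ∧ z < w0} ≤ F.ncard :=
        Set.ncard_le_ncard hsub (Set.toFinite F)
      have hlow0 : IsLow G p (Set.ncard {z | z ∈ LowSet G p h ∧ z < w0} + 1) h w0 :=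
        ⟨hw0T.1, by simp⟩
      have hdcard : ¬ (Set.ncard {z | z ∈ LowSet G p h ∧ z < w0} + 1 ≤ F.ncard) := by
        intro hle
        exact hw0T.2 (hlow _ (by omega) hle w0 hlow0)
      have heq : {z | z ∈ LowSet G p h ∧ z < w0} = F :=
        Set.eq_of_subset_of_ncard_le hsub (by omega) (Set.toFinite _)
      have hphlt : p h < w0 := by
        have : p h ∈ {z | z ∈ LowSet G p h ∧ z < w0} := heq ▸ hpH
        exact this.2
      -- w0 is a proper ancestor of h, hence w0 ≤ p h
      obtain ⟨⟨xw, hxw, hbk⟩, hlt0⟩ := hw0T.1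
      have hanc_w0h : Anc p w0 h := by
        have hhx : h ≤ xw := anc_le_s19 hple hxw
        rcases eq_or_lt_of_le hhx with heq2 | hlt2
        · exact heq2 ▸ hbk.2.1
        · exact hpre w0 h xw hlt0 hlt2 hbk.2.1
      have : w0 ≤ p h := anc_le_s19 hple (anc_step hanc_w0h (ne_of_gt hlt0))
      exact absurd hphlt (not_lt.mpr this)
  -- main argument
  have hfwd : ∀ z, ConnGF G F x z → Anc p h z := by
    intro z hz
    induction hz with
    | refl => exact hH.2 x hx
    | @tail b c h1 h2 ih => exact hsep b c h2.2.1 h2.2.2 ih h2.1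
  have hsymm : ∀ a b : Fin n, ConnGF G F a b → ConnGF G F b a := by
    intro a b hab
    exact (@Relation.ReflTransGen.symmetric _ _
      ⟨fun u w hw => ⟨hw.1.symm, hw.2.2, hw.2.1⟩⟩).symm _ _ hab
  intro y hyF
  constructor
  · intro hconn
    exact hdesc_incomp y (hfwd y hconn)
  · intro hy
    exact Relation.ReflTransGen.trans (hsymm h x (hincomp_conn h x hx)) (hincomp_conn h y hy)
end
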